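/- arXiv:1806.07682 — 7 statements merged into one kernel-verified Lean document; each statement's English description precedes it below -/
import Mathlib

section
/- Let A be an n×n real strictly diagonally dominant matrix, i.e. |a_{ii}| > Σ_{j≠i} |a_{ij}| for all i. Fix a natural number m < n and let T_m, E_m, F_m be the banded decomposition A = T_m − E_m − F_m, where (T_m)_{ij} = a_{ij} if |i−j| ≤ m and 0 otherwise, (E_m)_{ij} = −a_{ij} if i > j+m and 0 otherwise, (F_m)_{ij} = −a_{ij} if j > i+m and 0 otherwise. Then T_m is invertible and every complex eigenvalue λ of T_m⁻¹(E_m + F_m) satisfies |λ| < 1 (so the generalized Jacobi iteration converges for every initial guess). -/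
/-!
`T_m` keeps the diagonal of `A` and drops off-diagonal entries, so it is again strictly diagonally
dominant, hence invertible (Lévy–Desplanques). If `|λ| ≥ 1`, then `λ T_m - (E_m + F_m)` is strictly
diagonally dominant too: its entries are `λ a_ij` inside the band and `a_ij` outside it, so its
off-diagonal row sums are at most `|λ|` times those of `A`, while its diagonal is `λ a_ii`. But an
eigenvector of `T_m⁻¹ (E_m + F_m)` for `λ` lies in the kernel of this matrix.
-/

open Matrix Finset

namespace Matrix

variable {ι K K' : Type*} [Fintype ι] [DecidableEq ι]

def IsStrictlyDiagDominant [Norm K] (A : Matrix ι ι K) : Prop :=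
  ∀ i, ∑ j ∈ univ.erase i, ‖A i j‖ < ‖A i i‖

theorem IsStrictlyDiagDominant.det_ne_zero [NormedField K] {A : Matrix ι ι K}
    (hA : A.IsStrictlyDiagDominant) : A.det ≠ 0 :=
  det_ne_zero_of_sum_row_lt_diag hA

theorem IsStrictlyDiagDominant.of_norm_le [Norm K] [Norm K'] {A : Matrix ι ι K}
    {B : Matrix ι ι K'} (hA : A.IsStrictlyDiagDominant) {c : ℝ} (hc : 0 < c)
    (hdiag : ∀ i, c * ‖A i i‖ ≤ ‖B i i‖) (hle : ∀ i j, ‖B i j‖ ≤ c * ‖A i j‖) :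
    B.IsStrictlyDiagDominant := fun i =>
  calc ∑ j ∈ univ.erase i, ‖B i j‖
      ≤ ∑ j ∈ univ.erase i, c * ‖A i j‖ := sum_le_sum fun j _ => hle i j
    _ = c * ∑ j ∈ univ.erase i, ‖A i j‖ := (mul_sum _ _ _).symm
    _ < c * ‖A i i‖ := mul_lt_mul_of_pos_left (hA i) hc
    _ ≤ ‖B i i‖ := hdiag i

theorem det_smul_sub_eq_zero_of_mul_eq [Field K] {T B S : Matrix ι ι K} (hTB : T * B = S)
    {lam : K} {v : ι → K} (hv : v ≠ 0) (hBv : B *ᵥ v = lam • v) : (lam • T - S).det = 0 := by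
  refine exists_mulVec_eq_zero_iff.mp ⟨v, hv, ?_⟩
  rw [sub_mulVec, smul_mulVec, ← hTB, ← mulVec_mulVec, hBv, mulVec_smul, sub_self]

end Matrix

structure IsBandedDecomposition {n : ℕ} (m : ℕ) (A T E F : Matrix (Fin n) (Fin n) ℝ) : Prop where
  band : ∀ i j, T i j = if |(i : ℤ) - (j : ℤ)| ≤ (m : ℤ) then A i j else 0
  lower : ∀ i j, E i j = if (j : ℤ) + (m : ℤ) < (i : ℤ) then -A i j else 0
  upper : ∀ i j, F i j = if (i : ℤ) + (m : ℤ) < (j : ℤ) then -A i j else 0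

namespace IsBandedDecomposition

variable {n m : ℕ} {A T E F : Matrix (Fin n) (Fin n) ℝ}

theorem entries_of_abs_le (h : IsBandedDecomposition m A T E F) {i j : Fin n}
    (hij : |(i : ℤ) - (j : ℤ)| ≤ (m : ℤ)) : T i j = A i j ∧ E i j + F i j = 0 := by
  obtain ⟨h₁, h₂⟩ := abs_le.mp hij
  rw [h.band, h.lower, h.upper, if_pos hij, if_neg (by omega), if_neg (by omega), add_zero]
  exact ⟨rfl, rfl⟩

theorem entries_of_lt_abs (h : IsBandedDecomposition m A T E F) {i j : Fin n}
    (hij : (m : ℤ) < |(i : ℤ) - (j : ℤ)|) : T i j = 0 ∧ E i j + F i j = -A i j := by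
  refine ⟨by rw [h.band, if_neg hij.not_ge], ?_⟩
  rw [h.lower, h.upper]
  rcases lt_abs.mp hij with hij | hij
  · rw [if_pos (by omega), if_neg (by omega), add_zero]
  · rw [if_neg (by omega), if_pos (by omega), zero_add]

theorem entries_diag (h : IsBandedDecomposition m A T E F) (i : Fin n) :
    T i i = A i i ∧ E i i + F i i = 0 :=
  h.entries_of_abs_le (by simp)

theorem norm_band_le (h : IsBandedDecomposition m A T E F) (i j : Fin n) :
    ‖T i j‖ ≤ ‖A i j‖ := by
  rw [h.band]
  split_ifs <;> simp

theorem norm_smul_sub_le (h : IsBandedDecomposition m A T E F) {lam : ℂ} (hlam : 1 ≤ ‖lam‖)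
    (i j : Fin n) :
    ‖(lam • T.map Complex.ofReal - (E + F).map Complex.ofReal) i j‖ ≤ ‖lam‖ * ‖A i j‖ := by
  simp only [Matrix.sub_apply, Matrix.smul_apply, map_apply, Matrix.add_apply, smul_eq_mul]
  rcases le_or_gt |(i : ℤ) - (j : ℤ)| (m : ℤ) with hij | hij
  · obtain ⟨hT, hEF⟩ := h.entries_of_abs_le hij
    rw [hT, hEF]
    simp
  · obtain ⟨hT, hEF⟩ := h.entries_of_lt_abs hij
    rw [hT, hEF]
    simpa using le_mul_of_one_le_left (norm_nonneg (A i j)) hlam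

theorem norm_smul_sub_diag (h : IsBandedDecomposition m A T E F) (lam : ℂ) (i : Fin n) :
    ‖(lam • T.map Complex.ofReal - (E + F).map Complex.ofReal) i i‖ = ‖lam‖ * ‖A i i‖ := by
  obtain ⟨hT, hEF⟩ := h.entries_diag i
  simp only [Matrix.sub_apply, Matrix.smul_apply, map_apply, Matrix.add_apply, smul_eq_mul]
  rw [hT, hEF]
  simp

end IsBandedDecomposition

theorem gj_converges_of_sdd_general (n m : ℕ)
    (A T E F : Matrix (Fin n) (Fin n) ℝ)
    (hSDD : ∀ i, ∑ j ∈ Finset.univ.erase i, |A i j| < |A i i|)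
    (hT : ∀ i j, T i j = if |(i : ℤ) - (j : ℤ)| ≤ (m : ℤ) then A i j else 0)
    (hE : ∀ i j, E i j = if (j : ℤ) + (m : ℤ) < (i : ℤ) then -A i j else 0)
    (hF : ∀ i j, F i j = if (i : ℤ) + (m : ℤ) < (j : ℤ) then -A i j else 0) :
    IsUnit T ∧
      ∀ (lam : ℂ) (v : Fin n → ℂ), v ≠ 0 →
        ((T⁻¹ * (E + F)).map (Complex.ofReal)).mulVec v = lam • v →
        ‖lam‖ < 1 := by
  have hdec : IsBandedDecomposition m A T E F := ⟨hT, hE, hF⟩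
  have hA : A.IsStrictlyDiagDominant := fun i => by simpa only [Real.norm_eq_abs] using hSDD i
  have hTdet : T.det ≠ 0 :=
    (hA.of_norm_le one_pos (fun i => by rw [one_mul, (hdec.entries_diag i).1])
      fun i j => by simpa using hdec.norm_band_le i j).det_ne_zero
  refine ⟨(isUnit_iff_isUnit_det T).mpr hTdet.isUnit, fun lam v hv hBv => ?_⟩
  by_contra! hlam
  have hTB : T.map Complex.ofReal * (T⁻¹ * (E + F)).map Complex.ofReal =
      (E + F).map Complex.ofReal :=
    calc _ = (T * (T⁻¹ * (E + F))).map Complex.ofRealHom := Matrix.map_mul.symm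
      _ = _ := by rw [mul_nonsing_inv_cancel_left T (E + F) hTdet.isUnit]; rfl
  have hdom : (lam • T.map Complex.ofReal - (E + F).map Complex.ofReal).IsStrictlyDiagDominant :=
    hA.of_norm_le (one_pos.trans_le hlam) (fun i => (hdec.norm_smul_sub_diag lam i).ge)
      (hdec.norm_smul_sub_le hlam)
  exact hdom.det_ne_zero (det_smul_sub_eq_zero_of_mul_eq hTB hv hBv)

/-- Generalized Jacobi converges for strictly diagonally dominant matrices. -/
theorem gj_converges_of_sdd (n m : ℕ) (hm : m < n)
    (A T E F : Matrix (Fin n) (Fin n) ℝ)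
    (hSDD : ∀ i, ∑ j ∈ Finset.univ.erase i, |A i j| < |A i i|)
    (hT : ∀ i j, T i j = if |(i : ℤ) - (j : ℤ)| ≤ (m : ℤ) then A i j else 0)
    (hE : ∀ i j, E i j = if (j : ℤ) + (m : ℤ) < (i : ℤ) then -A i j else 0)
    (hF : ∀ i j, F i j = if (i : ℤ) + (m : ℤ) < (j : ℤ) then -A i j else 0) :
    IsUnit T ∧
      ∀ (lam : ℂ) (v : Fin n → ℂ), v ≠ 0 →
        ((T⁻¹ * (E + F)).map (Complex.ofReal)).mulVec v = lam • v →
        ‖lam‖ < 1 :=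
  gj_converges_of_sdd_general n m A T E F hSDD hT hE hF
end

section
/- Let A be an n×n nonsingular M-matrix, i.e. a_{ij} ≤ 0 for all i ≠ j, A is invertible, and A⁻¹ is entrywise nonnegative. Fix m < n and let A = T_m − E_m − F_m be the banded decomposition. Then T_m is invertible and every complex eigenvalue λ of T_m⁻¹(E_m + F_m) satisfies |λ| < 1 (generalized Jacobi converges for every initial guess). -/
open Matrix Finset

/-!
The vector `x = A⁻¹ 𝟙` is positive with `A x = 𝟙`. Since `T = A + (E + F)` with `E + F ≥ 0`, the
banded part `T` is a Z-matrix with `T x > 0`. Comparing `T u` with `c T x` at an index where `u / x`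
attains its minimum `c` shows that such a `T` is monotone (`T u ≥ 0 → u ≥ 0`), hence invertible
with `T⁻¹ ≥ 0`.
Then `G = T⁻¹ (E + F) ≥ 0` and `T (x - G x) = A x = 𝟙 > 0`, so `G x < x`; for an eigenvector `v`,
comparing `|v|` with its maximal multiple `c x` above it gives `|λ| < 1`.
-/

namespace Matrix

variable {ι : Type*} [Fintype ι]

theorem mulVec_nonneg_of_forall_nonneg {κ R : Type*} [Semiring R] [PartialOrder R]
    [IsOrderedRing R] {M : Matrix κ ι R} (hM : ∀ i j, 0 ≤ M i j) {x : ι → R} (hx : 0 ≤ x) :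
    0 ≤ M *ᵥ x :=
  fun i => sum_nonneg fun j _ => mul_nonneg (hM i j) (hx j)

theorem pos_of_nonneg_of_mulVec_apply_pos {A : Matrix ι ι ℝ}
    (hA : ∀ i j, i ≠ j → A i j ≤ 0) {x : ι → ℝ} (hx : 0 ≤ x) {i : ι} (hAx : 0 < (A *ᵥ x) i) :
    0 < x i := by
  refine (hx i).lt_of_ne fun hxi => hAx.not_ge ?_
  refine sum_nonpos fun j _ => ?_
  rcases eq_or_ne i j with rfl | hij
  · simp [← hxi]
  · exact mul_nonpos_of_nonpos_of_nonneg (hA i j hij) (hx j)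

theorem exists_pos_mulVec_eq_one [DecidableEq ι] {A : Matrix ι ι ℝ}
    (hZ : ∀ i j, i ≠ j → A i j ≤ 0) (hA : IsUnit A) (hAinv : ∀ i j, 0 ≤ A⁻¹ i j) :
    ∃ x, (∀ i, 0 < x i) ∧ A *ᵥ x = 1 := by
  have hAx : A *ᵥ (A⁻¹ *ᵥ 1) = 1 := by
    rw [mulVec_mulVec, mul_nonsing_inv A (A.isUnit_iff_isUnit_det.mp hA), one_mulVec]
  exact ⟨A⁻¹ *ᵥ 1, fun i => pos_of_nonneg_of_mulVec_apply_pos hZ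
    (mulVec_nonneg_of_forall_nonneg hAinv zero_le_one) (by simp [hAx]), hAx⟩

theorem exists_mul_le_and_mulVec_apply_le {T : Matrix ι ι ℝ}
    (hT : ∀ i j, i ≠ j → T i j ≤ 0) {x : ι → ℝ} (hx : ∀ i, 0 < x i) (u : ι → ℝ) [Nonempty ι] :
    ∃ c : ℝ, (∀ i, c * x i ≤ u i) ∧ ∃ k, (T *ᵥ u) k ≤ c * (T *ᵥ x) k := by
  obtain ⟨k, -, hk⟩ := exists_min_image univ (fun i => u i / x i) univ_nonempty
  have hle : ∀ i, u k / x k * x i ≤ u i := fun i =>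
    (le_div_iff₀ (hx i)).mp (hk i (mem_univ i))
  refine ⟨u k / x k, hle, k, ?_⟩
  simp only [mulVec, dotProduct, mul_sum]
  refine sum_le_sum fun j _ => ?_
  rw [mul_left_comm]
  rcases eq_or_ne k j with rfl | hkj
  · rw [div_mul_cancel₀ _ (hx k).ne']
  · exact mul_le_mul_of_nonpos_left (hle j) (hT k j hkj)

theorem nonneg_of_mulVec_nonneg {T : Matrix ι ι ℝ} (hT : ∀ i j, i ≠ j → T i j ≤ 0)
    {x : ι → ℝ} (hx : ∀ i, 0 < x i) (hTx : ∀ i, 0 < (T *ᵥ x) i) {u : ι → ℝ}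
    (hu : 0 ≤ T *ᵥ u) : 0 ≤ u := by
  intro i
  have : Nonempty ι := ⟨i⟩
  obtain ⟨c, hcu, k, hk⟩ := exists_mul_le_and_mulVec_apply_le hT hx u
  have hc : 0 ≤ c := by
    by_contra! hc
    linarith [show 0 ≤ (T *ᵥ u) k from hu k, mul_neg_of_neg_of_pos hc (hTx k)]
  exact (mul_nonneg hc (hx i).le).trans (hcu i)

theorem pos_of_mulVec_pos {T : Matrix ι ι ℝ} (hT : ∀ i j, i ≠ j → T i j ≤ 0)
    {x : ι → ℝ} (hx : ∀ i, 0 < x i) (hTx : ∀ i, 0 < (T *ᵥ x) i) {u : ι → ℝ}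
    (hu : ∀ i, 0 < (T *ᵥ u) i) (i : ι) : 0 < u i := by
  have : Nonempty ι := ⟨i⟩
  obtain ⟨c, hcu, k, hk⟩ := exists_mul_le_and_mulVec_apply_le hT hx u
  have hc : 0 < c := by
    by_contra! hc
    linarith [hu k, mul_nonpos_of_nonpos_of_nonneg hc (hTx k).le]
  exact (mul_pos hc (hx i)).trans_le (hcu i)

section Monotone

variable {K : Type*} [Field K] [LinearOrder K] [IsStrictOrderedRing K] [DecidableEq ι]
  {T : Matrix ι ι K}

theorem isUnit_of_forall_mulVec_nonneg_imp (hT : ∀ u, 0 ≤ T *ᵥ u → 0 ≤ u) : IsUnit T := by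
  refine mulVec_injective_iff_isUnit.mp fun u w huw => ?_
  have hzero : T *ᵥ (u - w) = 0 := by rw [mulVec_sub, huw, sub_self]
  have h₁ : 0 ≤ u - w := hT _ hzero.ge
  have h₂ : 0 ≤ -(u - w) := hT _ (by rw [mulVec_neg, hzero, neg_zero])
  exact sub_eq_zero.mp (le_antisymm (neg_nonneg.mp h₂) h₁)

theorem inv_apply_nonneg_of_forall_mulVec_nonneg_imp (hT : ∀ u, 0 ≤ T *ᵥ u → 0 ≤ u) (i j : ι) :
    0 ≤ T⁻¹ i j := by
  have hdet := T.isUnit_iff_isUnit_det.mp (isUnit_of_forall_mulVec_nonneg_imp hT)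
  have hcol : 0 ≤ T *ᵥ (T⁻¹ *ᵥ Pi.single j 1) := by
    rw [mulVec_mulVec, mul_nonsing_inv T hdet, one_mulVec]
    exact Pi.single_nonneg.mpr zero_le_one
  simpa [mulVec_single_one] using hT _ hcol i

end Monotone

theorem norm_mul_norm_le_sum_mul_norm {G : Matrix ι ι ℝ} (hG : ∀ i j, 0 ≤ G i j) {lam : ℂ}
    {v : ι → ℂ} (hv : (G.map Complex.ofReal) *ᵥ v = lam • v) (i : ι) :
    ‖lam‖ * ‖v i‖ ≤ ∑ j, G i j * ‖v j‖ :=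
  calc ‖lam‖ * ‖v i‖ = ‖∑ j, (G i j : ℂ) * v j‖ := by
        rw [← norm_mul, ← smul_eq_mul, ← Pi.smul_apply, ← hv]; rfl
    _ ≤ ∑ j, ‖(G i j : ℂ) * v j‖ := norm_sum_le _ _
    _ = ∑ j, G i j * ‖v j‖ := by
        simp only [norm_mul, Complex.norm_real, Real.norm_of_nonneg (hG _ _)]

theorem norm_lt_one_of_mulVec_lt {G : Matrix ι ι ℝ} (hG : ∀ i j, 0 ≤ G i j) {x : ι → ℝ}
    (hx : ∀ i, 0 < x i) (hGx : ∀ i, (G *ᵥ x) i < x i) {lam : ℂ} {v : ι → ℂ} (hv₀ : v ≠ 0)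
    (hv : (G.map Complex.ofReal) *ᵥ v = lam • v) : ‖lam‖ < 1 := by
  obtain ⟨i₀, hi₀⟩ := Function.ne_iff.mp hv₀
  obtain ⟨k, -, hk⟩ := exists_max_image univ (fun i => ‖v i‖ / x i) ⟨i₀, mem_univ i₀⟩
  set c := ‖v k‖ / x k
  have hvc : ∀ j, ‖v j‖ ≤ c * x j := fun j => (div_le_iff₀ (hx j)).mp (hk j (mem_univ j))
  have hc : 0 < c :=
    (div_pos (norm_pos_iff.mpr hi₀) (hx i₀)).trans_le (hk i₀ (mem_univ i₀))
  have hvk : ‖v k‖ = c * x k := (div_mul_cancel₀ _ (hx k).ne').symm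
  have key : ‖lam‖ * ‖v k‖ < 1 * ‖v k‖ :=
    calc ‖lam‖ * ‖v k‖ ≤ ∑ j, G k j * ‖v j‖ := norm_mul_norm_le_sum_mul_norm hG hv k
      _ ≤ ∑ j, G k j * (c * x j) :=
          sum_le_sum fun j _ => mul_le_mul_of_nonneg_left (hvc j) (hG k j)
      _ = c * (G *ᵥ x) k := by simp only [mulVec, dotProduct, mul_sum, mul_left_comm]
      _ < c * x k := mul_lt_mul_of_pos_left (hGx k) hc
      _ = 1 * ‖v k‖ := by rw [hvk, one_mul]
  exact lt_of_mul_lt_mul_right key (norm_nonneg _)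

end Matrix

section BandedSplitting

variable {n m : ℕ} {A T E F : Matrix (Fin n) (Fin n) ℝ}

theorem banded_eq_add_add
    (hT : ∀ i j, T i j = if |(i : ℤ) - (j : ℤ)| ≤ (m : ℤ) then A i j else 0)
    (hE : ∀ i j, E i j = if (j : ℤ) + (m : ℤ) < (i : ℤ) then -A i j else 0)
    (hF : ∀ i j, F i j = if (i : ℤ) + (m : ℤ) < (j : ℤ) then -A i j else 0) :
    T = A + (E + F) := by
  ext i j
  rw [Matrix.add_apply, Matrix.add_apply, hT, hE, hF]
  split_ifs with hband <;> rw [abs_le] at hband <;> first | (exfalso; omega) | ring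

theorem offBand_add_nonneg (hZ : ∀ i j, i ≠ j → A i j ≤ 0)
    (hE : ∀ i j, E i j = if (j : ℤ) + (m : ℤ) < (i : ℤ) then -A i j else 0)
    (hF : ∀ i j, F i j = if (i : ℤ) + (m : ℤ) < (j : ℤ) then -A i j else 0) (i j : Fin n) :
    0 ≤ (E + F) i j := by
  have hterm : ∀ (p : Prop) [Decidable p], (p → i ≠ j) → 0 ≤ if p then -A i j else 0 := by
    intro p _ hp
    split_ifs with h
    exacts [neg_nonneg.mpr (hZ i j (hp h)), le_rfl]
  rw [Matrix.add_apply, hE, hF]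
  exact add_nonneg (hterm _ fun h => by rintro rfl; omega) (hterm _ fun h => by rintro rfl; omega)

theorem banded_offDiag_nonpos (hZ : ∀ i j, i ≠ j → A i j ≤ 0)
    (hT : ∀ i j, T i j = if |(i : ℤ) - (j : ℤ)| ≤ (m : ℤ) then A i j else 0) {i j : Fin n}
    (hij : i ≠ j) : T i j ≤ 0 := by
  rw [hT]
  split_ifs
  exacts [hZ i j hij, le_rfl]

end BandedSplitting

theorem gj_converges_of_Mmatrix_general (n m : ℕ)
    (A T E F : Matrix (Fin n) (Fin n) ℝ)
    (hZ : ∀ i j, i ≠ j → A i j ≤ 0)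
    (hA : IsUnit A)
    (hAinv : ∀ i j, 0 ≤ A⁻¹ i j)
(hT : ∀ i j, T i j = if |(i : ℤ) - (j : ℤ)| ≤ (m : ℤ) then A i j else 0)
    (hE : ∀ i j, E i j = if (j : ℤ) + (m : ℤ) < (i : ℤ) then -A i j else 0)
    (hF : ∀ i j, F i j = if (i : ℤ) + (m : ℤ) < (j : ℤ) then -A i j else 0) :
    IsUnit T ∧
      ∀ (lam : ℂ) (v : Fin n → ℂ), v ≠ 0 →
        ((T⁻¹ * (E + F)).map (Complex.ofReal)).mulVec v = lam • v →
        ‖lam‖ < 1 := by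
  have hTA : T = A + (E + F) := banded_eq_add_add hT hE hF
  have hN : ∀ i j, 0 ≤ (E + F) i j := offBand_add_nonneg hZ hE hF
  have hTZ : ∀ i j, i ≠ j → T i j ≤ 0 := fun i j => banded_offDiag_nonpos hZ hT
  obtain ⟨x, hx, hAx⟩ := exists_pos_mulVec_eq_one hZ hA hAinv
  have hTx : ∀ i, 0 < (T *ᵥ x) i := fun i => by
    rw [hTA, add_mulVec, hAx, Pi.add_apply, Pi.one_apply]
    exact add_pos_of_pos_of_nonneg one_pos
      (mulVec_nonneg_of_forall_nonneg hN (fun j => (hx j).le) i)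
  have hmono : ∀ u, 0 ≤ T *ᵥ u → 0 ≤ u := fun u => nonneg_of_mulVec_nonneg hTZ hx hTx
  have hTunit : IsUnit T := isUnit_of_forall_mulVec_nonneg_imp hmono
  refine ⟨hTunit, fun lam v hv₀ hv => ?_⟩
  have hG : ∀ i j, 0 ≤ (T⁻¹ * (E + F)) i j := fun i j => by
    rw [mul_apply]
    exact sum_nonneg fun k _ =>
      mul_nonneg (inv_apply_nonneg_of_forall_mulVec_nonneg_imp hmono i k) (hN k j)
  have hres : T *ᵥ (x - (T⁻¹ * (E + F)) *ᵥ x) = 1 := by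
    rw [mulVec_sub, mulVec_mulVec,
      mul_nonsing_inv_cancel_left T _ (T.isUnit_iff_isUnit_det.mp hTunit), hTA, add_mulVec, hAx,
      add_sub_cancel_right]
  refine norm_lt_one_of_mulVec_lt hG hx (fun i => ?_) hv₀ hv
  exact sub_pos.mp <| pos_of_mulVec_pos hTZ hx hTx (u := x - (T⁻¹ * (E + F)) *ᵥ x)
    (fun j => by rw [hres]; exact one_pos) i

/-- Generalized Jacobi converges for nonsingular M-matrices. -/
theorem gj_converges_of_Mmatrix (n m : ℕ) (hm : m < n)
    (A T E F : Matrix (Fin n) (Fin n) ℝ)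
    (hZ : ∀ i j, i ≠ j → A i j ≤ 0)
    (hA : IsUnit A)
    (hAinv : ∀ i j, 0 ≤ A⁻¹ i j)
(hT : ∀ i j, T i j = if |(i : ℤ) - (j : ℤ)| ≤ (m : ℤ) then A i j else 0)
    (hE : ∀ i j, E i j = if (j : ℤ) + (m : ℤ) < (i : ℤ) then -A i j else 0)
    (hF : ∀ i j, F i j = if (i : ℤ) + (m : ℤ) < (j : ℤ) then -A i j else 0) :
    IsUnit T ∧
      ∀ (lam : ℂ) (v : Fin n → ℂ), v ≠ 0 →
        ((T⁻¹ * (E + F)).map (Complex.ofReal)).mulVec v = lam • v →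
        ‖lam‖ < 1 :=
  gj_converges_of_Mmatrix_general n m A T E F hZ hA hAinv hT hE hF
end

section
/- Let A be an n×n nonsingular M-matrix (nonpositive off-diagonal entries, invertible, entrywise nonnegative inverse). Fix m < n and let A = T_m − E_m − F_m be the banded decomposition. Then T_m − E_m is invertible and every complex eigenvalue λ of (T_m − E_m)⁻¹ F_m satisfies |λ| < 1 (generalized Gauss–Seidel converges for every initial guess). -/
/-!
Put `M = T - E`, so that `A = M - F`. Since `A⁻¹ ≥ 0` is invertible, `x = A⁻¹ 1` is a positive
vector with `A x = 1`. The splitting separates the entries of `A` without cancellation: off the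
diagonal `|M i j| + |F i j| = -A i j`, and `F` vanishes on the diagonal. Hence, for `‖μ‖ ≤ 1`, the
complex matrix `M - μ F` is strictly diagonally dominant with respect to the weights `x`, so it is
nonsingular. At `μ = 0` this makes `M` invertible, and an eigenvalue `λ` of `M⁻¹ F` with
`‖λ‖ ≥ 1` would give a kernel vector of `M - λ⁻¹ F`.
-/

open Matrix Finset

namespace Matrix

variable {ι : Type*} [Fintype ι] [DecidableEq ι]

theorem det_ne_zero_of_weighted_sum_row_lt_diag {𝕜 : Type*} [RCLike 𝕜] {B : Matrix ι ι 𝕜}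
    {x : ι → ℝ} (hx : ∀ i, 0 < x i)
    (h : ∀ i, ∑ j ∈ univ.erase i, ‖B i j‖ * x j < ‖B i i‖ * x i) : B.det ≠ 0 := by
  have hscaled : (B * diagonal fun j => (x j : 𝕜)).det ≠ 0 := by
    refine det_ne_zero_of_sum_row_lt_diag fun i => ?_
    simpa [mul_diagonal, norm_mul, abs_of_pos (hx _)] using h i
  rw [det_mul] at hscaled
  exact left_ne_zero_of_mul hscaled

theorem inv_mulVec_one_pos {K : Type*} [Field K] [LinearOrder K] [IsStrictOrderedRing K]
    {A : Matrix ι ι K} (hA : IsUnit A) (hAinv : ∀ i j, 0 ≤ A⁻¹ i j) (i : ι) :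
    0 < (A⁻¹ *ᵥ 1) i := by
  obtain ⟨j, hj⟩ : ∃ j, A⁻¹ i j ≠ 0 := by
    by_contra! h
    have := congrFun (congrFun (nonsing_inv_mul A ((isUnit_iff_isUnit_det A).mp hA)) i) i
    simp [mul_apply, h] at this
  simp only [mulVec, dotProduct, Pi.one_apply, mul_one]
  exact sum_pos' (fun k _ => hAinv i k) ⟨j, mem_univ j, (hAinv i j).lt_of_ne' hj⟩

theorem det_map_sub_smul_ne_zero {𝕜 : Type*} [RCLike 𝕜] {A M F : Matrix ι ι ℝ} {x : ι → ℝ}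
    (hx : ∀ i, 0 < x i) (hAx : ∀ i, 0 < (A *ᵥ x) i)
    (hM : ∀ i, M i i = A i i) (hF : ∀ i, F i i = 0)
    (hMF : ∀ i j, i ≠ j → |M i j| + |F i j| ≤ -A i j) {μ : 𝕜} (hμ : ‖μ‖ ≤ 1) :
    (M.map (↑) - μ • F.map (↑) : Matrix ι ι 𝕜).det ≠ 0 := by
  refine det_ne_zero_of_weighted_sum_row_lt_diag hx fun i => ?_
  have hentry : ∀ j ∈ univ.erase i,
      ‖(M.map (↑) - μ • F.map (↑) : Matrix ι ι 𝕜) i j‖ * x j ≤ -A i j * x j := by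
    intro j hj
    refine mul_le_mul_of_nonneg_right ?_ (hx j).le
    rw [sub_apply, map_apply, smul_apply, map_apply, smul_eq_mul]
    calc ‖(M i j : 𝕜) - μ * (F i j : 𝕜)‖ ≤ ‖(M i j : 𝕜)‖ + ‖μ‖ * ‖(F i j : 𝕜)‖ := by
          rw [← norm_mul]
          exact norm_sub_le _ _
      _ ≤ |M i j| + 1 * |F i j| := by
          simp only [RCLike.norm_ofReal]
          gcongr
      _ ≤ -A i j := by simpa using hMF i j (ne_of_mem_erase hj).symm
  have hrow : A i i * x i + ∑ j ∈ univ.erase i, A i j * x j = (A *ᵥ x) i :=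
    add_sum_erase _ (fun j => A i j * x j) (mem_univ i)
  calc ∑ j ∈ univ.erase i, ‖(M.map (↑) - μ • F.map (↑) : Matrix ι ι 𝕜) i j‖ * x j
      ≤ ∑ j ∈ univ.erase i, -A i j * x j := sum_le_sum hentry
    _ < A i i * x i := by
        simp only [neg_mul, sum_neg_distrib]
        linarith [hAx i]
    _ ≤ ‖(M.map (↑) - μ • F.map (↑) : Matrix ι ι 𝕜) i i‖ * x i := by
        simp only [sub_apply, map_apply, smul_apply, hM, hF, RCLike.ofReal_zero, smul_zero,
          sub_zero, RCLike.norm_ofReal]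
        exact mul_le_mul_of_nonneg_right (le_abs_self _) (hx i).le

theorem map_sub_inv_smul_mulVec_eq_zero {𝕜 : Type*} [RCLike 𝕜] {M F : Matrix ι ι ℝ}
    (hM : IsUnit M) {lam : 𝕜} (hlam : lam ≠ 0) {v : ι → 𝕜}
    (hv : (M⁻¹ * F).map (↑) *ᵥ v = lam • v) :
    (M.map (↑) - lam⁻¹ • F.map (↑) : Matrix ι ι 𝕜) *ᵥ v = 0 := by
  have hmap_mul : ∀ P Q : Matrix ι ι ℝ,
      (P * Q).map ((↑) : ℝ → 𝕜) = P.map (↑) * Q.map (↑) :=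
    fun _ _ => Matrix.map_mul (f := algebraMap ℝ 𝕜)
  have hFv : F.map (↑) *ᵥ v = lam • (M.map (↑) *ᵥ v : ι → 𝕜) := by
    have := congrArg (M.map ((↑) : ℝ → 𝕜) *ᵥ ·) hv
    rwa [mulVec_mulVec, ← hmap_mul, ← Matrix.mul_assoc,
      mul_nonsing_inv M ((isUnit_iff_isUnit_det M).mp hM), Matrix.one_mul, mulVec_smul] at this
  rw [sub_mulVec, smul_mulVec, hFv, inv_smul_smul₀ hlam, sub_self]

end Matrix

theorem banded_sub_lower_apply {n m : ℕ} {A T E : Matrix (Fin n) (Fin n) ℝ}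
    (hT : ∀ i j, T i j = if |(i : ℤ) - (j : ℤ)| ≤ (m : ℤ) then A i j else 0)
    (hE : ∀ i j, E i j = if (j : ℤ) + (m : ℤ) < (i : ℤ) then -A i j else 0) (i j : Fin n) :
    (T - E) i j = if (i : ℤ) + (m : ℤ) < (j : ℤ) then 0 else A i j := by
  simp only [Matrix.sub_apply, hT, hE]
  split_ifs <;> (try rw [abs_le] at *) <;> first | omega | ring

theorem ggs_converges_of_Mmatrix_general (n m : ℕ)
    (A T E F : Matrix (Fin n) (Fin n) ℝ)
    (hZ : ∀ i j, i ≠ j → A i j ≤ 0)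
    (hA : IsUnit A)
    (hAinv : ∀ i j, 0 ≤ A⁻¹ i j)
(hT : ∀ i j, T i j = if |(i : ℤ) - (j : ℤ)| ≤ (m : ℤ) then A i j else 0)
    (hE : ∀ i j, E i j = if (j : ℤ) + (m : ℤ) < (i : ℤ) then -A i j else 0)
    (hF : ∀ i j, F i j = if (i : ℤ) + (m : ℤ) < (j : ℤ) then -A i j else 0) :
    IsUnit (T - E) ∧
      ∀ (lam : ℂ) (v : Fin n → ℂ), v ≠ 0 →
        (((T - E)⁻¹ * F).map (Complex.ofReal)).mulVec v = lam • v →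
        ‖lam‖ < 1 := by
  have hAx : ∀ i, 0 < (A *ᵥ (A⁻¹ *ᵥ 1)) i := by
    simp [mulVec_mulVec, mul_nonsing_inv A ((isUnit_iff_isUnit_det A).mp hA)]
  have hdet : ∀ μ : ℂ, ‖μ‖ ≤ 1 →
      ((T - E).map Complex.ofReal - μ • F.map Complex.ofReal).det ≠ 0 := by
    refine fun μ hμ => det_map_sub_smul_ne_zero (M := T - E) (F := F)
      (inv_mulVec_one_pos hA hAinv) hAx (fun i => by simp [banded_sub_lower_apply hT hE])
      (fun i => by simp [hF]) (fun i j hij => ?_) hμ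
    rw [banded_sub_lower_apply hT hE, hF]
    split_ifs <;> simp [abs_of_nonpos (hZ i j hij)]
  have hM : IsUnit (T - E) := by
    rw [isUnit_iff_isUnit_det, isUnit_iff_ne_zero]
    have h0 := hdet 0 (by simp)
    rwa [zero_smul, sub_zero,
      show (T - E).map Complex.ofReal = Complex.ofRealHom.mapMatrix (T - E) from rfl,
      ← RingHom.map_det, Complex.ofRealHom_eq_coe, Complex.ofReal_ne_zero] at h0
  refine ⟨hM, fun lam v hv heig => ?_⟩
  by_contra! hlam
  have hlam0 : lam ≠ 0 := by
    rintro rfl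
    norm_num at hlam
  refine hdet lam⁻¹ (by simpa using inv_le_one_of_one_le₀ hlam) ?_
  exact exists_mulVec_eq_zero_iff.mp ⟨v, hv, map_sub_inv_smul_mulVec_eq_zero hM hlam0 heig⟩

/-- Generalized Gauss–Seidel converges for nonsingular M-matrices. -/
theorem ggs_converges_of_Mmatrix (n m : ℕ) (hm : m < n)
    (A T E F : Matrix (Fin n) (Fin n) ℝ)
    (hZ : ∀ i j, i ≠ j → A i j ≤ 0)
    (hA : IsUnit A)
    (hAinv : ∀ i j, 0 ≤ A⁻¹ i j)
(hT : ∀ i j, T i j = if |(i : ℤ) - (j : ℤ)| ≤ (m : ℤ) then A i j else 0)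
    (hE : ∀ i j, E i j = if (j : ℤ) + (m : ℤ) < (i : ℤ) then -A i j else 0)
    (hF : ∀ i j, F i j = if (i : ℤ) + (m : ℤ) < (j : ℤ) then -A i j else 0) :
    IsUnit (T - E) ∧
      ∀ (lam : ℂ) (v : Fin n → ℂ), v ≠ 0 →
        (((T - E)⁻¹ * F).map (Complex.ofReal)).mulVec v = lam • v →
        ‖lam‖ < 1 :=
  ggs_converges_of_Mmatrix_general n m A T E F hZ hA hAinv hT hE hF
end

section
/- Let A be an n×n real H-matrix, i.e. its comparison matrix M(A), defined by M(A)_{ii} = |a_{ii}| and M(A)_{ij} = −|a_{ij}| for i ≠ j, is a nonsingular M-matrix (invertible with entrywise nonnegative inverse). Fix m < n and let A = T_m − E_m − F_m be the banded decomposition. Then T_m is invertible and every complex eigenvalue λ of T_m⁻¹(E_m + F_m) satisfies |λ| < 1 (the generalized Jacobi method converges for every initial guess). -/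
open Matrix Finset

/-!
For an H-matrix `A`, the vector `u = M(A)⁻¹ 𝟙` is entrywise positive and `M(A) u = 𝟙 > 0`, i.e.
`A` is strictly diagonally dominant after scaling its columns by `u`. Any matrix whose diagonal is
`c` times that of `A` and whose off-diagonal entries are at most `c` times those of `A` in
absolute value inherits this weighted dominance, hence is nonsingular (Levy–Desplanques). This
applies to `T_m` (with `c = 1`) and, if `|λ| ≥ 1`, to `λ T_m − (E_m + F_m)` (with `c = |λ|`),
because each entry of the latter is either `λ a_ij` or `a_ij`.
-/

namespace Matrix

variable {ι : Type*} [Fintype ι] [DecidableEq ι]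

def IsStrictlyDiagDominantWith {α : Type*} [Norm α] (B : Matrix ι ι α) (u : ι → ℝ) : Prop :=
  ∀ i, ∑ j ∈ univ.erase i, ‖B i j‖ * u j < ‖B i i‖ * u i

theorem IsStrictlyDiagDominantWith.of_norm_le {α β : Type*} [Norm α] [Norm β]
    {B : Matrix ι ι α} {C : Matrix ι ι β} {u : ι → ℝ} {c : ℝ}
    (hB : B.IsStrictlyDiagDominantWith u) (hu : ∀ i, 0 ≤ u i) (hc : 0 < c)
    (hdiag : ∀ i, c * ‖B i i‖ ≤ ‖C i i‖) (hoff : ∀ i j, i ≠ j → ‖C i j‖ ≤ c * ‖B i j‖) :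
    C.IsStrictlyDiagDominantWith u := fun i =>
  calc ∑ j ∈ univ.erase i, ‖C i j‖ * u j
      ≤ ∑ j ∈ univ.erase i, c * ‖B i j‖ * u j :=
        sum_le_sum fun j hj =>
          mul_le_mul_of_nonneg_right (hoff i j (ne_of_mem_erase hj).symm) (hu j)
    _ = c * ∑ j ∈ univ.erase i, ‖B i j‖ * u j := by simp_rw [mul_sum, mul_assoc]
    _ < c * (‖B i i‖ * u i) := mul_lt_mul_of_pos_left (hB i) hc
    _ ≤ ‖C i i‖ * u i := by
        rw [← mul_assoc]; exact mul_le_mul_of_nonneg_right (hdiag i) (hu i)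

theorem IsStrictlyDiagDominantWith.det_ne_zero {𝕜 : Type*} [RCLike 𝕜] {B : Matrix ι ι 𝕜}
    {u : ι → ℝ} (hB : B.IsStrictlyDiagDominantWith u) (hu : ∀ i, 0 < u i) : B.det ≠ 0 := by
  have hBD : (B * diagonal fun j => (u j : 𝕜)).det ≠ 0 := by
    refine det_ne_zero_of_sum_row_lt_diag fun i => ?_
    simpa [mul_diagonal, norm_mul, abs_of_pos (hu _)] using hB i
  rw [det_mul] at hBD
  exact left_ne_zero_of_mul hBD

theorem isStrictlyDiagDominantWith_of_comparison {A M : Matrix ι ι ℝ} {u : ι → ℝ}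
    (hM : ∀ i j, M i j = if i = j then |A i i| else -|A i j|) (hMu : ∀ i, 0 < (M *ᵥ u) i) :
    A.IsStrictlyDiagDominantWith u := by
  intro i
  have h := hMu i
  rw [mulVec, dotProduct, ← add_sum_erase _ _ (mem_univ i), hM, if_pos rfl] at h
  have hoff : ∑ j ∈ univ.erase i, M i j * u j = -∑ j ∈ univ.erase i, |A i j| * u j := by
    rw [← sum_neg_distrib]
    refine sum_congr rfl fun j hj => ?_
    rw [hM, if_neg (ne_of_mem_erase hj).symm, neg_mul]
  simp only [Real.norm_eq_abs]
  linarith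

theorem inv_mulVec_one_pos_s4 {M : Matrix ι ι ℝ} (hM : IsUnit M) (hinv : ∀ i j, 0 ≤ M⁻¹ i j)
    (i : ι) : 0 < (M⁻¹ *ᵥ 1) i := by
  by_contra! h
  have hrow : ∀ j, M⁻¹ i j = 0 := by
    have hsum : ∑ j, M⁻¹ i j = 0 :=
      le_antisymm (by simpa [mulVec, dotProduct] using h) (sum_nonneg fun j _ => hinv i j)
    exact fun j => (sum_eq_zero_iff_of_nonneg fun j _ => hinv i j).mp hsum j (mem_univ j)
  have hii := congrFun (congrFun (nonsing_inv_mul M ((isUnit_iff_isUnit_det M).mp hM)) i) i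
  simp [mul_apply, hrow] at hii

theorem smul_sub_mulVec_eq_zero {T N : Matrix ι ι ℝ} (hT : IsUnit T) {lam : ℂ} {v : ι → ℂ}
    (heig : (T⁻¹ * N).map Complex.ofReal *ᵥ v = lam • v) :
    (lam • T.map Complex.ofReal - N.map Complex.ofReal) *ᵥ v = 0 := by
  have hN : N.map Complex.ofReal = T.map Complex.ofReal * (T⁻¹ * N).map Complex.ofReal := by
    conv_lhs => rw [← mul_nonsing_inv_cancel_left (A := T) N ((isUnit_iff_isUnit_det T).mp hT)]
    exact Matrix.map_mul (f := Complex.ofRealHom)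
  rw [sub_mulVec, hN, ← mulVec_mulVec, heig, smul_mulVec, mulVec_smul, sub_self]

section Splitting

variable {A T : Matrix ι ι ℝ} {u : ι → ℝ}

theorem isStrictlyDiagDominantWith_smul_sub_of_splitting (hA : A.IsStrictlyDiagDominantWith u)
    (hu : ∀ i, 0 ≤ u i) (hdiag : ∀ i, T i i = A i i) (hT : ∀ i j, T i j = A i j ∨ T i j = 0)
    {c : ℂ} (hc : 1 ≤ ‖c‖) :
    (c • T.map Complex.ofReal - (T - A).map Complex.ofReal).IsStrictlyDiagDominantWith u := by
  refine hA.of_norm_le hu (by linarith) (fun i => by simp [hdiag]) fun i j _ => ?_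
  rcases hT i j with h | h
  · simp [h]
  · simpa [h] using le_mul_of_one_le_left (abs_nonneg (A i j)) hc

theorem isUnit_and_norm_lt_one_of_splitting (hA : A.IsStrictlyDiagDominantWith u)
    (hu : ∀ i, 0 < u i) (hdiag : ∀ i, T i i = A i i) (hT : ∀ i j, T i j = A i j ∨ T i j = 0) :
    IsUnit T ∧ ∀ (lam : ℂ) (v : ι → ℂ), v ≠ 0 →
      (T⁻¹ * (T - A)).map Complex.ofReal *ᵥ v = lam • v → ‖lam‖ < 1 := by
  have hTdom : T.IsStrictlyDiagDominantWith u := by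
    refine hA.of_norm_le (fun i => (hu i).le) one_pos (fun i => by simp [hdiag]) fun i j _ => ?_
    rcases hT i j with h | h <;> simp [h]
  have hTunit : IsUnit T := (isUnit_iff_isUnit_det T).mpr (hTdom.det_ne_zero hu).isUnit
  refine ⟨hTunit, fun lam v hv heig => ?_⟩
  by_contra! hlam
  have hdom := isStrictlyDiagDominantWith_smul_sub_of_splitting hA (fun i => (hu i).le) hdiag hT hlam
  exact hdom.det_ne_zero hu (exists_mulVec_eq_zero_iff.mp ⟨v, hv, smul_sub_mulVec_eq_zero hTunit heig⟩)

end Splitting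

end Matrix

theorem gj_converges_of_Hmatrix_general (n m : ℕ)
    (A MA T E F : Matrix (Fin n) (Fin n) ℝ)
    (hMA : ∀ i j, MA i j = if i = j then |A i i| else -|A i j|)
    (hMAunit : IsUnit MA)
    (hMAinv : ∀ i j, 0 ≤ MA⁻¹ i j)
(hT : ∀ i j, T i j = if |(i : ℤ) - (j : ℤ)| ≤ (m : ℤ) then A i j else 0)
    (hE : ∀ i j, E i j = if (j : ℤ) + (m : ℤ) < (i : ℤ) then -A i j else 0)
    (hF : ∀ i j, F i j = if (i : ℤ) + (m : ℤ) < (j : ℤ) then -A i j else 0) :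
    IsUnit T ∧
      ∀ (lam : ℂ) (v : Fin n → ℂ), v ≠ 0 →
        ((T⁻¹ * (E + F)).map (Complex.ofReal)).mulVec v = lam • v →
        ‖lam‖ < 1 := by
  have hA : A.IsStrictlyDiagDominantWith (MA⁻¹ *ᵥ 1) := by
    refine isStrictlyDiagDominantWith_of_comparison hMA fun i => ?_
    rw [mulVec_mulVec, mul_nonsing_inv _ ((isUnit_iff_isUnit_det MA).mp hMAunit), one_mulVec]
    exact one_pos
  have hEF : E + F = T - A := by
    ext i j
    simp only [Matrix.add_apply, Matrix.sub_apply, hT, hE, hF, abs_le]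
    split_ifs <;> first | omega | ring
  rw [hEF]
  refine isUnit_and_norm_lt_one_of_splitting hA (inv_mulVec_one_pos_s4 hMAunit hMAinv)
    (fun i => by simp [hT]) fun i j => ?_
  rw [hT]
  split_ifs <;> simp

/-- Generalized Jacobi converges for H-matrices. -/
theorem gj_converges_of_Hmatrix (n m : ℕ) (hm : m < n)
    (A MA T E F : Matrix (Fin n) (Fin n) ℝ)
    (hMA : ∀ i j, MA i j = if i = j then |A i i| else -|A i j|)
    (hMAunit : IsUnit MA)
    (hMAinv : ∀ i j, 0 ≤ MA⁻¹ i j)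
(hT : ∀ i j, T i j = if |(i : ℤ) - (j : ℤ)| ≤ (m : ℤ) then A i j else 0)
    (hE : ∀ i j, E i j = if (j : ℤ) + (m : ℤ) < (i : ℤ) then -A i j else 0)
    (hF : ∀ i j, F i j = if (i : ℤ) + (m : ℤ) < (j : ℤ) then -A i j else 0) :
    IsUnit T ∧
      ∀ (lam : ℂ) (v : Fin n → ℂ), v ≠ 0 →
        ((T⁻¹ * (E + F)).map (Complex.ofReal)).mulVec v = lam • v →
        ‖lam‖ < 1 :=
  gj_converges_of_Hmatrix_general n m A MA T E F hMA hMAunit hMAinv hT hE hF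
end

section
/- Let A be an n×n real strictly diagonally dominant matrix (|a_{ii}| > Σ_{j≠i}|a_{ij}| for all i), fix m < n with banded decomposition A = T_m − E_m − F_m, and let 0 < ω ≤ 1. Then T_m − ω E_m is invertible and every complex eigenvalue λ of the GSOR iteration matrix (T_m − ω E_m)⁻¹[(1−ω)T_m + ω F_m] satisfies |λ| < 1 (the generalized SOR method converges for every initial guess). -/
open Matrix Finset

/-!
With `B = T - ωE` and `C = (1 - ω)T + ωF`, an eigenvector of `B⁻¹C` for `λ` is a null vector of
`λB - C = (λ - 1 + ω)T - λωE - ωF`. Because `T`, `E`, `F` have disjoint supports and together carry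
the entries of `A`, a combination `xT + yE + zF` with `‖y‖, ‖z‖ ≤ ‖x‖ ≠ 0` is strictly diagonally
dominant along with `A`, hence nonsingular (Levy–Desplanques). This gives the invertibility of
`B` (`x = 1`, `y = -ω`, `z = 0`), and if `|λ| ≥ 1` then `|λ - 1 + ω| ≥ ω|λ| ≥ ω` puts `λB - C`
in the same class, so it has no null vector.
-/

theorem det_ne_zero_of_norm_le_mul_abs {ι K : Type*} [Fintype ι] [DecidableEq ι] [NormedField K]
    {A : Matrix ι ι ℝ} (hA : ∀ i, ∑ j ∈ univ.erase i, |A i j| < |A i i|)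
    {M : Matrix ι ι K} {c : ℝ} (hc : 0 < c)
    (hdiag : ∀ i, c * |A i i| ≤ ‖M i i‖) (hle : ∀ i j, ‖M i j‖ ≤ c * |A i j|) :
    M.det ≠ 0 :=
  det_ne_zero_of_sum_row_lt_diag fun i =>
    calc ∑ j ∈ univ.erase i, ‖M i j‖
        ≤ ∑ j ∈ univ.erase i, c * |A i j| := sum_le_sum fun j _ => hle i j
      _ = c * ∑ j ∈ univ.erase i, |A i j| := (mul_sum _ _ _).symm
      _ < c * |A i i| := mul_lt_mul_of_pos_left (hA i) hc
      _ ≤ ‖M i i‖ := hdiag i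

section Banded

variable {n m : ℕ} {A T E F : Matrix (Fin n) (Fin n) ℝ}

theorem banded_apply_self
    (hT : ∀ i j, T i j = if |(i : ℤ) - (j : ℤ)| ≤ (m : ℤ) then A i j else 0)
    (hE : ∀ i j, E i j = if (j : ℤ) + (m : ℤ) < (i : ℤ) then -A i j else 0)
    (hF : ∀ i j, F i j = if (i : ℤ) + (m : ℤ) < (j : ℤ) then -A i j else 0) (i : Fin n) :
    T i i = A i i ∧ E i i = 0 ∧ F i i = 0 := by
  simp [hT, hE, hF]

theorem banded_apply_cases
    (hT : ∀ i j, T i j = if |(i : ℤ) - (j : ℤ)| ≤ (m : ℤ) then A i j else 0)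
    (hE : ∀ i j, E i j = if (j : ℤ) + (m : ℤ) < (i : ℤ) then -A i j else 0)
    (hF : ∀ i j, F i j = if (i : ℤ) + (m : ℤ) < (j : ℤ) then -A i j else 0) (i j : Fin n) :
    (T i j = A i j ∧ E i j = 0 ∧ F i j = 0) ∨ (T i j = 0 ∧ E i j = -A i j ∧ F i j = 0) ∨
      (T i j = 0 ∧ E i j = 0 ∧ F i j = -A i j) := by
  rw [hT, hE, hF]
  rcases le_or_gt |(i : ℤ) - j| m with hband | hout
  · have := abs_le.1 hband
    simp only [if_pos hband, if_neg (show ¬(j : ℤ) + m < i by omega),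
      if_neg (show ¬(i : ℤ) + m < j by omega), and_self, true_or]
  · rcases lt_abs.1 hout with hlow | hup
    · simp only [if_neg hout.not_ge, if_pos (show (j : ℤ) + m < i by omega),
        if_neg (show ¬(i : ℤ) + m < j by omega), and_self, true_or, or_true]
    · simp only [if_neg hout.not_ge, if_neg (show ¬(j : ℤ) + m < i by omega),
        if_pos (show (i : ℤ) + m < j by omega), and_self, or_true]

theorem det_banded_combination_ne_zero {𝕜 : Type*} [RCLike 𝕜]
    (hA : ∀ i, ∑ j ∈ univ.erase i, |A i j| < |A i i|)
    (hT : ∀ i j, T i j = if |(i : ℤ) - (j : ℤ)| ≤ (m : ℤ) then A i j else 0)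
    (hE : ∀ i j, E i j = if (j : ℤ) + (m : ℤ) < (i : ℤ) then -A i j else 0)
    (hF : ∀ i j, F i j = if (i : ℤ) + (m : ℤ) < (j : ℤ) then -A i j else 0)
    {x y z : 𝕜} (hx : x ≠ 0) (hy : ‖y‖ ≤ ‖x‖) (hz : ‖z‖ ≤ ‖x‖) :
    (Matrix.of fun i j => x * T i j + y * E i j + z * F i j).det ≠ 0 := by
  refine det_ne_zero_of_norm_le_mul_abs hA (norm_pos_iff.2 hx) (fun i => ?_) (fun i j => ?_)
  · obtain ⟨hTi, hEi, hFi⟩ := banded_apply_self hT hE hF i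
    simp [hTi, hEi, hFi]
  · rcases banded_apply_cases hT hE hF i j with ⟨hTij, hEij, hFij⟩ | ⟨hTij, hEij, hFij⟩ |
      ⟨hTij, hEij, hFij⟩ <;> simp only [of_apply, hTij, hEij, hFij, RCLike.ofReal_zero,
        RCLike.ofReal_neg, mul_zero, add_zero, zero_add, mul_neg, norm_neg, norm_mul,
        RCLike.norm_ofReal]
    · exact le_rfl
    · exact mul_le_mul_of_nonneg_right hy (abs_nonneg _)
    · exact mul_le_mul_of_nonneg_right hz (abs_nonneg _)

end Banded

theorem mulVec_smul_sub_eq_zero_of_mul_eq {ι R : Type*} [Fintype ι] [CommRing R]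
    {B H C : Matrix ι ι R} (hBH : B * H = C) {μ : R} {v : ι → R} (hv : H *ᵥ v = μ • v) :
    (μ • B - C) *ᵥ v = 0 := by
  rw [sub_mulVec, smul_mulVec, ← hBH, ← mulVec_mulVec, hv, mulVec_smul, sub_self]

theorem mul_norm_le_norm_sub_one_sub {𝕜 : Type*} [RCLike 𝕜] {ω : ℝ} (hω : ω ≤ 1) {μ : 𝕜}
    (hμ : 1 ≤ ‖μ‖) : ω * ‖μ‖ ≤ ‖μ - (1 - ω : ℝ)‖ := by
  have := norm_sub_norm_le μ ((1 - ω : ℝ) : 𝕜)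
  rw [RCLike.norm_ofReal, abs_of_nonneg (sub_nonneg.2 hω)] at this
  nlinarith

theorem gsor_converges_of_sdd_general (n m : ℕ)
    (A T E F : Matrix (Fin n) (Fin n) ℝ) (ω : ℝ)
    (hω0 : 0 < ω) (hω1 : ω ≤ 1)
    (hSDD : ∀ i, ∑ j ∈ Finset.univ.erase i, |A i j| < |A i i|)
(hT : ∀ i j, T i j = if |(i : ℤ) - (j : ℤ)| ≤ (m : ℤ) then A i j else 0)
    (hE : ∀ i j, E i j = if (j : ℤ) + (m : ℤ) < (i : ℤ) then -A i j else 0)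
    (hF : ∀ i j, F i j = if (i : ℤ) + (m : ℤ) < (j : ℤ) then -A i j else 0) :
    IsUnit (T - ω • E) ∧
      ∀ (lam : ℂ) (v : Fin n → ℂ), v ≠ 0 →
        (((T - ω • E)⁻¹ * ((1 - ω) • T + ω • F)).map (Complex.ofReal)).mulVec v = lam • v →
        ‖lam‖ < 1 := by
  have hB : IsUnit (T - ω • E).det := by
    have hBof : T - ω • E = of fun i j => (1 : ℝ) * T i j + -ω * E i j + 0 * F i j := by
      ext i j
      simp [sub_eq_add_neg]
    rw [isUnit_iff_ne_zero, hBof]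
    exact det_banded_combination_ne_zero hSDD hT hE hF one_ne_zero
      (by simpa [abs_of_pos hω0] using hω1) (by simp)
  refine ⟨(isUnit_iff_isUnit_det _).2 hB, fun lam v hv hlam => ?_⟩
  by_contra! hlam1
  have hc : ω * ‖lam‖ ≤ ‖lam - (1 - ω : ℝ)‖ := mul_norm_le_norm_sub_one_sub hω1 hlam1
  have hωc : ω ≤ ‖lam - (1 - ω : ℝ)‖ := (le_mul_of_one_le_right hω0.le hlam1).trans hc
  let complexify := Complex.ofRealHom.mapMatrix (m := Fin n)
  have hBH := congrArg complexify (mul_nonsing_inv_cancel_left _ ((1 - ω) • T + ω • F) hB)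
  rw [map_mul] at hBH
  have hpencil : lam • complexify (T - ω • E) - complexify ((1 - ω) • T + ω • F) =
      of fun i j => (lam - (1 - ω : ℝ)) * T i j + -(lam * ω) * E i j + -(ω : ℂ) * F i j := by
    ext i j
    simp only [complexify, RingHom.mapMatrix_apply, map_apply, Matrix.sub_apply, Matrix.smul_apply,
      Matrix.add_apply, of_apply, smul_eq_mul, Complex.ofRealHom_eq_coe, Complex.ofReal_sub,
      Complex.ofReal_mul, Complex.ofReal_add, Complex.ofReal_one]
    ring
  have hnull := hpencil ▸ mulVec_smul_sub_eq_zero_of_mul_eq hBH hlam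
  refine det_banded_combination_ne_zero hSDD hT hE hF ?_ ?_ ?_
    (exists_mulVec_eq_zero_iff.1 ⟨v, hv, hnull⟩)
  · exact norm_ne_zero_iff.1 (hω0.trans_le hωc).ne'
  · simpa [abs_of_pos hω0, mul_comm] using hc
  · simpa [abs_of_pos hω0] using hωc

/-- Generalized SOR with 0 < ω ≤ 1 converges for strictly diagonally dominant matrices. -/
theorem gsor_converges_of_sdd (n m : ℕ) (hm : m < n)
    (A T E F : Matrix (Fin n) (Fin n) ℝ) (ω : ℝ)
    (hω0 : 0 < ω) (hω1 : ω ≤ 1)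
    (hSDD : ∀ i, ∑ j ∈ Finset.univ.erase i, |A i j| < |A i i|)
(hT : ∀ i j, T i j = if |(i : ℤ) - (j : ℤ)| ≤ (m : ℤ) then A i j else 0)
    (hE : ∀ i j, E i j = if (j : ℤ) + (m : ℤ) < (i : ℤ) then -A i j else 0)
    (hF : ∀ i j, F i j = if (i : ℤ) + (m : ℤ) < (j : ℤ) then -A i j else 0) :
    IsUnit (T - ω • E) ∧
      ∀ (lam : ℂ) (v : Fin n → ℂ), v ≠ 0 →
        (((T - ω • E)⁻¹ * ((1 - ω) • T + ω • F)).map (Complex.ofReal)).mulVec v = lam • v →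
        ‖lam‖ < 1 :=
  gsor_converges_of_sdd_general n m A T E F ω hω0 hω1 hSDD hT hE hF
end

section
/- Let A be an n×n nonsingular M-matrix with banded decomposition A = T_m − E_m − F_m for some m < n, and let 0 < ω ≤ 1. Then the matrix M₁ = I − ω T_m⁻¹ E_m is invertible and M₁⁻¹ is entrywise nonnegative; moreover N₁ = (1−ω)I + ω T_m⁻¹ F_m is entrywise nonnegative, so that ω T_m⁻¹ A = M₁ − N₁ is a regular splitting of ω T_m⁻¹ A. -/
open Matrix Finset

/-!
A nonsingular M-matrix `A` admits `x > 0` with `A x > 0`, namely `x = A⁻¹ 1`. Conversely a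
Z-matrix `B` admitting such an `x` is a nonsingular M-matrix: if `B v ≥ 0` and `v` had a negative
entry, then at an index `i` minimising `v i / x i` the vector `w = v - (v i / x i) x ≥ 0` vanishes,
so `(B w) i ≤ 0`, whereas `(B w) i = (B v) i - (v i / x i) (B x) i > 0`.

Since `T = A + E + F ≥ A`, the same `x` gives `T x > 0`, so `T⁻¹ ≥ 0`. Writing
`x = T⁻¹ A x + T⁻¹ E x + T⁻¹ F x` shows
`(I - ω T⁻¹ E) x = T⁻¹ A x + (1 - ω) T⁻¹ E x + T⁻¹ F x > 0`, and `I - ω T⁻¹ E` is a Z-matrix.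
-/

namespace Matrix

def IsZMatrix {ι α : Type*} [Zero α] [LE α] (B : Matrix ι ι α) : Prop :=
  ∀ i j, i ≠ j → B i j ≤ 0

def IsRegularSplitting {ι α : Type*} [Fintype ι] [DecidableEq ι] [CommRing α] [LE α]
    (B M N : Matrix ι ι α) : Prop :=
  IsUnit M ∧ (∀ i j, 0 ≤ M⁻¹ i j) ∧ (∀ i j, 0 ≤ N i j) ∧ B = M - N

variable {ι 𝕜 : Type*} [Field 𝕜] [LinearOrder 𝕜] [IsStrictOrderedRing 𝕜]

lemma isZMatrix_one_sub_smul [DecidableEq ι] {P : Matrix ι ι 𝕜} (hP : ∀ i j, 0 ≤ P i j) {ω : 𝕜}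
    (hω : 0 ≤ ω) : (1 - ω • P).IsZMatrix := fun i j hij => by
  simpa [one_apply_ne hij] using mul_nonneg hω (hP i j)

section Fintype

variable [Fintype ι]

lemma mul_apply_nonneg {A B : Matrix ι ι 𝕜} (hA : ∀ i j, 0 ≤ A i j) (hB : ∀ i j, 0 ≤ B i j)
    (i j : ι) : 0 ≤ (A * B) i j :=
  sum_nonneg fun k _ => mul_nonneg (hA i k) (hB k j)

lemma mulVec_nonneg {A : Matrix ι ι 𝕜} (hA : ∀ i j, 0 ≤ A i j) {v : ι → 𝕜} (hv : 0 ≤ v) :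
    0 ≤ A *ᵥ v :=
  fun i => sum_nonneg fun j _ => mul_nonneg (hA i j) (hv j)

lemma mulVec_pos_of_le {A T : Matrix ι ι 𝕜} (hAT : ∀ i j, A i j ≤ T i j) {x : ι → 𝕜}
    (hx : 0 ≤ x) (hAx : ∀ i, 0 < (A *ᵥ x) i) (i : ι) : 0 < (T *ᵥ x) i :=
  (hAx i).trans_le <| sum_le_sum fun j _ => mul_le_mul_of_nonneg_right (hAT i j) (hx j)

lemma IsZMatrix.nonneg_of_mulVec_nonneg {B : Matrix ι ι 𝕜} (hB : B.IsZMatrix) {x : ι → 𝕜}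
    (hx : ∀ i, 0 < x i) (hBx : ∀ i, 0 < (B *ᵥ x) i) {v : ι → 𝕜} (hv : 0 ≤ B *ᵥ v) : 0 ≤ v := by
  by_contra hneg
  obtain ⟨k, hk⟩ : ∃ k, v k < 0 := by simpa [Pi.le_def] using hneg
  obtain ⟨i, -, hi⟩ := exists_min_image univ (fun j => v j / x j) ⟨k, mem_univ k⟩
  set t := v i / x i
  have ht : t < 0 := (hi k (mem_univ k)).trans_lt (div_neg_of_neg_of_pos hk (hx k))
  have hw : ∀ j, 0 ≤ (v - t • x) j := fun j => by
    have := (le_div_iff₀ (hx j)).1 (hi j (mem_univ j))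
    simp only [Pi.sub_apply, Pi.smul_apply, smul_eq_mul]
    linarith
  have hwi : (v - t • x) i = 0 := by
    simp [t, div_mul_cancel₀ _ (hx i).ne']
  have hle : (B *ᵥ (v - t • x)) i ≤ 0 := sum_nonpos fun j _ => by
    rcases eq_or_ne i j with rfl | hij
    · simp [hwi]
    · exact mul_nonpos_of_nonpos_of_nonneg (hB i j hij) (hw j)
  have hpos : 0 < (B *ᵥ (v - t • x)) i := by
    rw [mulVec_sub, mulVec_smul, Pi.sub_apply, Pi.smul_apply, smul_eq_mul]
    linarith [show (0 : 𝕜) ≤ (B *ᵥ v) i from hv i, mul_neg_of_neg_of_pos ht (hBx i)]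
  exact hle.not_gt hpos

variable [DecidableEq ι]

lemma mulVec_pos_of_isUnit {A : Matrix ι ι 𝕜} (hA : ∀ i j, 0 ≤ A i j) (hAu : IsUnit A)
    {v : ι → 𝕜} (hv : ∀ i, 0 < v i) (i : ι) : 0 < (A *ᵥ v) i := by
  have hterm : ∀ j ∈ univ, 0 ≤ A i j * v j := fun j _ => mul_nonneg (hA i j) (hv j).le
  refine (sum_nonneg hterm).lt_of_ne' fun hsum => ?_
  have hrow : ∀ j, A i j = 0 := fun j =>
    (mul_eq_zero.1 ((sum_eq_zero_iff_of_nonneg hterm).1 hsum j (mem_univ j))).resolve_right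
      (hv j).ne'
  exact ((isUnit_iff_isUnit_det A).1 hAu).ne_zero (det_eq_zero_of_row_eq_zero i hrow)

lemma exists_pos_mulVec_pos {A : Matrix ι ι 𝕜} (hAu : IsUnit A) (hAinv : ∀ i j, 0 ≤ A⁻¹ i j) :
    ∃ x : ι → 𝕜, (∀ i, 0 < x i) ∧ ∀ i, 0 < (A *ᵥ x) i := by
  refine ⟨A⁻¹ *ᵥ 1, mulVec_pos_of_isUnit hAinv (isUnit_nonsing_inv_iff.2 hAu)
    fun _ => one_pos, fun i => ?_⟩
  rw [mulVec_mulVec, mul_nonsing_inv A ((isUnit_iff_isUnit_det A).1 hAu), one_mulVec]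
  exact one_pos

namespace IsZMatrix

variable {B : Matrix ι ι 𝕜} {x : ι → 𝕜}

lemma isUnit_of_mulVec_pos (hB : B.IsZMatrix) (hx : ∀ i, 0 < x i)
    (hBx : ∀ i, 0 < (B *ᵥ x) i) : IsUnit B := by
  refine mulVec_injective_iff_isUnit.1 fun u w huw => ?_
  have h0 : B *ᵥ (u - w) = 0 := by rw [mulVec_sub, huw, sub_self]
  have h1 := hB.nonneg_of_mulVec_nonneg hx hBx h0.ge
  have h2 := hB.nonneg_of_mulVec_nonneg hx hBx (v := w - u)
    (by rw [← neg_sub, mulVec_neg, h0, neg_zero])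
  exact le_antisymm (sub_nonneg.1 h2) (sub_nonneg.1 h1)

lemma inv_apply_nonneg_of_mulVec_pos (hB : B.IsZMatrix) (hx : ∀ i, 0 < x i)
    (hBx : ∀ i, 0 < (B *ᵥ x) i) (i j : ι) : 0 ≤ B⁻¹ i j := by
  have hdet := (isUnit_iff_isUnit_det B).1 (hB.isUnit_of_mulVec_pos hx hBx)
  have hcol : 0 ≤ B⁻¹ *ᵥ Pi.single j 1 := hB.nonneg_of_mulVec_nonneg hx hBx <| by
    rw [mulVec_mulVec, mul_nonsing_inv B hdet, one_mulVec]
    exact Pi.single_nonneg.2 zero_le_one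
  simpa [mulVec_single_one] using hcol i

end IsZMatrix

variable {T E F : Matrix ι ι 𝕜}

lemma one_sub_smul_inv_mul_mulVec_pos (hTu : IsUnit T) (hTinv : ∀ i j, 0 ≤ T⁻¹ i j)
    (hE : ∀ i j, 0 ≤ E i j) (hF : ∀ i j, 0 ≤ F i j) {x : ι → 𝕜} (hx : 0 ≤ x)
    (hAx : ∀ i, 0 < ((T - E - F) *ᵥ x) i) {ω : 𝕜} (hω : ω ≤ 1) (i : ι) :
    0 < ((1 - ω • (T⁻¹ * E)) *ᵥ x) i := by
  have hsplit : 1 - ω • (T⁻¹ * E) = T⁻¹ * (T - E - F) + (1 - ω) • (T⁻¹ * E) + T⁻¹ * F := by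
    rw [mul_sub, mul_sub, nonsing_inv_mul T ((isUnit_iff_isUnit_det T).1 hTu)]
    module
  rw [hsplit, add_mulVec, add_mulVec, smul_mulVec, ← mulVec_mulVec, ← mulVec_mulVec,
    ← mulVec_mulVec]
  exact add_pos_of_pos_of_nonneg
    (add_pos_of_pos_of_nonneg (mulVec_pos_of_isUnit hTinv (isUnit_nonsing_inv_iff.2 hTu) hAx i)
      (mul_nonneg (sub_nonneg.2 hω) (mulVec_nonneg hTinv (mulVec_nonneg hE hx) i)))
    (mulVec_nonneg hTinv (mulVec_nonneg hF hx) i)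

theorem isRegularSplitting_smul_inv_mul (hT : T.IsZMatrix) (hE : ∀ i j, 0 ≤ E i j)
    (hF : ∀ i j, 0 ≤ F i j) (hA : IsUnit (T - E - F)) (hAinv : ∀ i j, 0 ≤ (T - E - F)⁻¹ i j)
    {ω : 𝕜} (hω0 : 0 ≤ ω) (hω1 : ω ≤ 1) :
    IsRegularSplitting (ω • (T⁻¹ * (T - E - F))) (1 - ω • (T⁻¹ * E))
      ((1 - ω) • 1 + ω • (T⁻¹ * F)) := by
  obtain ⟨x, hx, hAx⟩ := exists_pos_mulVec_pos hA hAinv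
  have hTx : ∀ i, 0 < (T *ᵥ x) i :=
    mulVec_pos_of_le (fun i j => by simp only [sub_apply]; linarith [hE i j, hF i j])
      (fun i => (hx i).le) hAx
  have hTu := hT.isUnit_of_mulVec_pos hx hTx
  have hTinv := hT.inv_apply_nonneg_of_mulVec_pos hx hTx
  have hM := isZMatrix_one_sub_smul (mul_apply_nonneg hTinv hE) hω0
  have hMx := one_sub_smul_inv_mul_mulVec_pos hTu hTinv hE hF (fun i => (hx i).le) hAx hω1
  refine ⟨hM.isUnit_of_mulVec_pos hx hMx, hM.inv_apply_nonneg_of_mulVec_pos hx hMx,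
    fun i j => ?_, ?_⟩
  · simp only [add_apply, smul_apply, smul_eq_mul]
    exact add_nonneg (mul_nonneg (sub_nonneg.2 hω1) (zero_le_one_elem i j))
      (mul_nonneg hω0 (mul_apply_nonneg hTinv hF i j))
  · rw [mul_sub, mul_sub, nonsing_inv_mul T ((isUnit_iff_isUnit_det T).1 hTu)]
    module

end Fintype

end Matrix

theorem gsor_regular_splitting_of_Mmatrix_general (n m : ℕ)
    (A T E F : Matrix (Fin n) (Fin n) ℝ) (ω : ℝ)
    (hω0 : 0 < ω) (hω1 : ω ≤ 1)
    (hZ : ∀ i j, i ≠ j → A i j ≤ 0)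
    (hA : IsUnit A)
    (hAinv : ∀ i j, 0 ≤ A⁻¹ i j)
(hT : ∀ i j, T i j = if |(i : ℤ) - (j : ℤ)| ≤ (m : ℤ) then A i j else 0)
    (hE : ∀ i j, E i j = if (j : ℤ) + (m : ℤ) < (i : ℤ) then -A i j else 0)
    (hF : ∀ i j, F i j = if (i : ℤ) + (m : ℤ) < (j : ℤ) then -A i j else 0) :
    IsUnit (1 - ω • (T⁻¹ * E)) ∧
      (∀ i j, 0 ≤ (1 - ω • (T⁻¹ * E))⁻¹ i j) ∧
      (∀ i j, 0 ≤ ((1 - ω) • (1 : Matrix (Fin n) (Fin n) ℝ) + ω • (T⁻¹ * F)) i j) ∧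
      ω • (T⁻¹ * A) =
        (1 - ω • (T⁻¹ * E)) - ((1 - ω) • (1 : Matrix (Fin n) (Fin n) ℝ) + ω • (T⁻¹ * F)) := by
  have hTZ : T.IsZMatrix := fun i j hij => by
    rw [hT]
    split_ifs
    exacts [hZ i j hij, le_rfl]
  have hEnn : ∀ i j, 0 ≤ E i j := fun i j => by
    rw [hE]
    split_ifs
    exacts [neg_nonneg.2 (hZ i j (by omega)), le_rfl]
  have hFnn : ∀ i j, 0 ≤ F i j := fun i j => by
    rw [hF]
    split_ifs
    exacts [neg_nonneg.2 (hZ i j (by omega)), le_rfl]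
  have hATEF : A = T - E - F := by
    ext i j
    simp only [Matrix.sub_apply, hT, hE, hF, abs_le]
    split_ifs <;> first | ring1 | (exfalso; omega)
  subst hATEF
  exact isRegularSplitting_smul_inv_mul hTZ hEnn hFnn hA hAinv hω0.le hω1

/-- For a nonsingular M-matrix and 0 < ω ≤ 1, ω T_m⁻¹ A = M₁ − N₁ with
M₁ = I − ω T_m⁻¹ E_m, N₁ = (1−ω)I + ω T_m⁻¹ F_m is a regular splitting. -/
theorem gsor_regular_splitting_of_Mmatrix (n m : ℕ) (hm : m < n)
    (A T E F : Matrix (Fin n) (Fin n) ℝ) (ω : ℝ)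
    (hω0 : 0 < ω) (hω1 : ω ≤ 1)
    (hZ : ∀ i j, i ≠ j → A i j ≤ 0)
    (hA : IsUnit A)
    (hAinv : ∀ i j, 0 ≤ A⁻¹ i j)
(hT : ∀ i j, T i j = if |(i : ℤ) - (j : ℤ)| ≤ (m : ℤ) then A i j else 0)
    (hE : ∀ i j, E i j = if (j : ℤ) + (m : ℤ) < (i : ℤ) then -A i j else 0)
    (hF : ∀ i j, F i j = if (i : ℤ) + (m : ℤ) < (j : ℤ) then -A i j else 0) :
    IsUnit (1 - ω • (T⁻¹ * E)) ∧
      (∀ i j, 0 ≤ (1 - ω • (T⁻¹ * E))⁻¹ i j) ∧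
      (∀ i j, 0 ≤ ((1 - ω) • (1 : Matrix (Fin n) (Fin n) ℝ) + ω • (T⁻¹ * F)) i j) ∧
      ω • (T⁻¹ * A) =
        (1 - ω • (T⁻¹ * E)) - ((1 - ω) • (1 : Matrix (Fin n) (Fin n) ℝ) + ω • (T⁻¹ * F)) :=
  gsor_regular_splitting_of_Mmatrix_general n m A T E F ω hω0 hω1 hZ hA hAinv hT hE hF
end

section
/- Let A be an n×n real H-matrix with comparison matrix M(A) (where M(A)_{ii} = |a_{ii}|, M(A)_{ij} = −|a_{ij}| for i ≠ j) a nonsingular M-matrix. Fix m < n with banded decomposition A = T_m − E_m − F_m, let D = diag(A) and R_m = T_m − D, and let a, b be complex numbers with |a| ≤ 1 and |b| ≤ 1. Then any complex vector x satisfying T_m x − a E_m x − b F_m x = 0 must be zero; in particular the matrix T_m − a E_m − b F_m is invertible. -/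
/-!
Every entry of `B = T_m - a E_m - b F_m` is the corresponding entry of `A` multiplied by `1`,
`a` or `b`, with factor `1` on the diagonal, so `M(B)` dominates `M(A)` entrywise.
If `B x = 0`, the triangle inequality in each row gives `M(B) |x| ≤ 0`, hence `M(A) |x| ≤ 0`
since `|x| ≥ 0`, and monotonicity of `M(A)` forces `|x| = 0`.
-/

open Matrix Finset

namespace Matrix

variable {ι : Type*} [DecidableEq ι]

def comparison {α : Type*} [Norm α] (B : Matrix ι ι α) : Matrix ι ι ℝ :=
  fun i j => if i = j then ‖B i i‖ else -‖B i j‖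

theorem comparison_le_comparison {α β : Type*} [Norm α] [Norm β]
    {A : Matrix ι ι α} {B : Matrix ι ι β} (hdiag : ∀ i, ‖A i i‖ ≤ ‖B i i‖)
    (hoff : ∀ i j, ‖B i j‖ ≤ ‖A i j‖) (i j : ι) :
    A.comparison i j ≤ B.comparison i j := by
  unfold comparison
  split_ifs
  · exact hdiag i
  · exact neg_le_neg (hoff i j)

theorem comparison_mulVec_norm_nonpos [Fintype ι] {𝕜 : Type*} [NormedDivisionRing 𝕜]
    {B : Matrix ι ι 𝕜} {x : ι → 𝕜} (hx : B *ᵥ x = 0) :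
    B.comparison *ᵥ (fun j => ‖x j‖) ≤ 0 := by
  intro i
  have hrow : B i i * x i = -∑ j ∈ univ.erase i, B i j * x j := by
    rw [eq_neg_iff_add_eq_zero, add_sum_erase univ (fun j => B i j * x j) (mem_univ i)]
    exact congrFun hx i
  have hdom : ‖B i i‖ * ‖x i‖ ≤ ∑ j ∈ univ.erase i, ‖B i j‖ * ‖x j‖ := by
    calc ‖B i i‖ * ‖x i‖ = ‖∑ j ∈ univ.erase i, B i j * x j‖ := by
          rw [← norm_mul, hrow, norm_neg]
      _ ≤ ∑ j ∈ univ.erase i, ‖B i j * x j‖ := norm_sum_le _ _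
      _ = ∑ j ∈ univ.erase i, ‖B i j‖ * ‖x j‖ := by simp only [norm_mul]
  have hoff : ∑ j ∈ univ.erase i, B.comparison i j * ‖x j‖
      = -∑ j ∈ univ.erase i, ‖B i j‖ * ‖x j‖ := by
    rw [← sum_neg_distrib]
    refine sum_congr rfl fun j hj => ?_
    rw [comparison, if_neg (ne_of_mem_erase hj).symm, neg_mul]
  rw [Pi.zero_apply, mulVec, dotProduct, ← add_sum_erase univ _ (mem_univ i), hoff,
    comparison, if_pos rfl]
  linarith

theorem nonpos_of_mulVec_nonpos [Fintype ι] {M : Matrix ι ι ℝ} (hM : IsUnit M)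
    (hMinv : ∀ i j, 0 ≤ M⁻¹ i j) {y : ι → ℝ} (hy : M *ᵥ y ≤ 0) : y ≤ 0 := by
  have hdet : IsUnit M.det := (isUnit_iff_isUnit_det M).mp hM
  have hyeq : y = M⁻¹ *ᵥ (M *ᵥ y) := by
    rw [mulVec_mulVec, nonsing_inv_mul _ hdet, one_mulVec]
  intro i
  rw [hyeq]
  exact sum_nonpos fun j _ => mul_nonpos_of_nonneg_of_nonpos (hMinv i j) (hy j)

theorem eq_zero_of_mulVec_eq_zero_of_le_comparison [Fintype ι]
    {𝕜 : Type*} [NormedDivisionRing 𝕜]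
    {M : Matrix ι ι ℝ} (hM : IsUnit M) (hMinv : ∀ i j, 0 ≤ M⁻¹ i j)
    {B : Matrix ι ι 𝕜} (hle : ∀ i j, M i j ≤ B.comparison i j)
    {x : ι → 𝕜} (hx : B *ᵥ x = 0) : x = 0 := by
  have hMy : M *ᵥ (fun j => ‖x j‖) ≤ 0 := fun i =>
    calc (M *ᵥ fun j => ‖x j‖) i ≤ (B.comparison *ᵥ fun j => ‖x j‖) i :=
          sum_le_sum fun j _ => mul_le_mul_of_nonneg_right (hle i j) (norm_nonneg _)
      _ ≤ 0 := comparison_mulVec_norm_nonpos hx i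
  funext i
  exact norm_le_zero_iff.mp (nonpos_of_mulVec_nonpos hM hMinv hMy i)

end Matrix

section Banded

variable {n m : ℕ} {A T E F : Matrix (Fin n) (Fin n) ℝ}

theorem scaledBanded_apply (a b : ℂ)
    (hT : ∀ i j, T i j = if |(i : ℤ) - (j : ℤ)| ≤ (m : ℤ) then A i j else 0)
    (hE : ∀ i j, E i j = if (j : ℤ) + (m : ℤ) < (i : ℤ) then -A i j else 0)
    (hF : ∀ i j, F i j = if (i : ℤ) + (m : ℤ) < (j : ℤ) then -A i j else 0) (i j : Fin n) :
    (T.map Complex.ofReal - a • E.map Complex.ofReal - b • F.map Complex.ofReal) i j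
      = (if |(i : ℤ) - (j : ℤ)| ≤ (m : ℤ) then 1
          else if (j : ℤ) + (m : ℤ) < (i : ℤ) then a else b) * A i j := by
  simp only [Matrix.sub_apply, Matrix.smul_apply, Matrix.map_apply, hT, hE, hF, smul_eq_mul]
  split_ifs <;> first | (exfalso; rw [abs_le] at *; omega) | (push_cast; ring)

end Banded

theorem Hmatrix_scaled_banded_invertible_general (n m : ℕ)
    (A MA T E F : Matrix (Fin n) (Fin n) ℝ) (a b : ℂ)
    (ha : ‖a‖ ≤ 1) (hb : ‖b‖ ≤ 1)
    (hMA : ∀ i j, MA i j = if i = j then |A i i| else -|A i j|)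
    (hMAunit : IsUnit MA)
    (hMAinv : ∀ i j, 0 ≤ MA⁻¹ i j)
(hT : ∀ i j, T i j = if |(i : ℤ) - (j : ℤ)| ≤ (m : ℤ) then A i j else 0)
    (hE : ∀ i j, E i j = if (j : ℤ) + (m : ℤ) < (i : ℤ) then -A i j else 0)
    (hF : ∀ i j, F i j = if (i : ℤ) + (m : ℤ) < (j : ℤ) then -A i j else 0) :
    (∀ x : Fin n → ℂ,
        ((T.map Complex.ofReal) - a • (E.map Complex.ofReal)
          - b • (F.map Complex.ofReal)).mulVec x = 0 → x = 0) ∧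
      IsUnit ((T.map Complex.ofReal) - a • (E.map Complex.ofReal)
        - b • (F.map Complex.ofReal)) := by
  set B := T.map Complex.ofReal - a • E.map Complex.ofReal - b • F.map Complex.ofReal
  have hentry : ∀ i j, B i j = _ * A i j := scaledBanded_apply a b hT hE hF
  have hdiag : ∀ i, ‖A i i‖ ≤ ‖B i i‖ := fun i => by
    simp [B, hentry, Complex.norm_real]
  have hoff : ∀ i j, ‖B i j‖ ≤ ‖A i j‖ := fun i j => by
    rw [hentry, norm_mul, Complex.norm_real]
    refine mul_le_of_le_one_left (norm_nonneg _) ?_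
    split_ifs <;> simp [ha, hb]
  have hMA_eq : ∀ i j, MA i j = A.comparison i j := fun i j => by
    simp only [hMA, comparison, Real.norm_eq_abs]
  have hker : ∀ x, B *ᵥ x = 0 → x = 0 := fun x =>
    eq_zero_of_mulVec_eq_zero_of_le_comparison hMAunit hMAinv fun i j =>
      (hMA_eq i j).trans_le (comparison_le_comparison hdiag hoff i j)
  refine ⟨hker, (isUnit_iff_isUnit_det B).mpr (isUnit_iff_ne_zero.mpr fun hdet => ?_)⟩
  obtain ⟨x, hx0, hx⟩ := exists_mulVec_eq_zero_iff.mpr hdet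
  exact hx0 (hker x hx)

/-- For an H-matrix A and complex scalars a, b of modulus ≤ 1, the matrix
T_m − a E_m − b F_m has trivial kernel, hence is invertible. -/
theorem Hmatrix_scaled_banded_invertible (n m : ℕ) (hm : m < n)
    (A MA T E F D R : Matrix (Fin n) (Fin n) ℝ) (a b : ℂ)
    (ha : ‖a‖ ≤ 1) (hb : ‖b‖ ≤ 1)
    (hMA : ∀ i j, MA i j = if i = j then |A i i| else -|A i j|)
    (hMAunit : IsUnit MA)
    (hMAinv : ∀ i j, 0 ≤ MA⁻¹ i j)
(hT : ∀ i j, T i j = if |(i : ℤ) - (j : ℤ)| ≤ (m : ℤ) then A i j else 0)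
    (hE : ∀ i j, E i j = if (j : ℤ) + (m : ℤ) < (i : ℤ) then -A i j else 0)
    (hF : ∀ i j, F i j = if (i : ℤ) + (m : ℤ) < (j : ℤ) then -A i j else 0)
    (hD : D = Matrix.diagonal (fun i => A i i))
    (hR : R = T - D) :
    (∀ x : Fin n → ℂ,
        ((T.map Complex.ofReal) - a • (E.map Complex.ofReal)
          - b • (F.map Complex.ofReal)).mulVec x = 0 → x = 0) ∧
      IsUnit ((T.map Complex.ofReal) - a • (E.map Complex.ofReal)
        - b • (F.map Complex.ofReal)) :=
  Hmatrix_scaled_banded_invertible_general n m A MA T E F a b ha hb hMA hMAunit hMAinv hT hE hF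
end
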